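/- For integers n > m > 0, integer k > 0, real b > -1, and nonnegative reals r_1,…,r_k with t(n-1,m-1,k) > 0, the inequality t(n-1,m,k)/t(n-1,m-1,k) < s(n-1,m)/s(n-1,m-1) holds, where t(n,m,k) = Σ_{i=1}^{k} r_{k+1-i} C(n-i,m) and s(n,m) = Σ_{i=0}^{m} C(n,i) b^{m-i}. Equivalently, -t(n-1,m-1,k)/s(n-1,m-1) < -t(n-1,m,k)/s(n-1,m). -/
import Mathlib


noncomputable def s (b : ℝ) (n m : ℕ) : ℝ :=
  ∑ i ∈ Finset.range (m + 1), (n.choose i : ℝ) * b ^ (m - i)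

noncomputable def binom (a : ℤ) (c : ℕ) : ℝ :=
  if 0 ≤ a then (a.toNat.choose c : ℝ) else 0

noncomputable def t (r : ℕ → ℝ) (n m k : ℕ) : ℝ :=
  ∑ i ∈ Finset.Icc 1 k, r (k + 1 - i) * binom ((n : ℤ) - i) m

lemma s_succ (b : ℝ) (n m : ℕ) : s b (n+1) (m+1) = s b n (m+1) + s b n m := by
  unfold s
  rw [Finset.sum_range_succ' (fun i => (((n+1).choose i : ℝ)) * b ^ (m+1-i)),
      Finset.sum_range_succ' (fun i => ((n.choose i : ℝ)) * b ^ (m+1-i))]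
  simp only [Nat.choose_succ_succ, Nat.succ_sub_succ, Nat.choose_zero_right,
    Nat.sub_zero, Nat.cast_add, Nat.cast_one]
  simp only [add_mul, Finset.sum_add_distrib]
  ring

lemma s_diag (b : ℝ) (n : ℕ) : s b n n = (1 + b) ^ n := by
  rw [add_pow]
  unfold s
  apply Finset.sum_congr rfl
  intro i hi
  ring

lemma s_pos {b : ℝ} (hb : -1 < b) : ∀ n m : ℕ, m ≤ n → 0 < s b n m := by
  have h1b : 0 < 1 + b := by linarith
  intro n
  induction n with
  | zero => intro m hm; interval_cases m; simp [s]
  | succ n ih =>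
    intro m hm
    match m with
    | 0 => simp [s]
    | m + 1 =>
      rcases Nat.lt_or_ge (m+1) (n+1) with h | h
      · rw [s_succ]
        have h1 : 0 < s b n (m+1) := ih (m+1) (by omega)
        have h2 : 0 < s b n m := ih m (by omega)
        linarith
      · have : m + 1 = n + 1 := by omega
        rw [this, s_diag]
        positivity

lemma s_zero (b : ℝ) (n : ℕ) : s b n 0 = 1 := by simp [s]

lemma s_one (b : ℝ) (n : ℕ) : s b n 1 = b + n := by
  simp [s, Finset.sum_range_succ]

lemma f_pos {b : ℝ} (hb : -1 < b) :
    ∀ n m : ℕ, m + 1 ≤ n → ((n:ℝ) - (m+1)) * s b n m < ((m:ℝ)+1) * s b n (m+1) := by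
  have h1b : 0 < 1 + b := by linarith
  intro n
  induction n with
  | zero => intro m hm; omega
  | succ n ih =>
    intro m hm
    match m with
    | 0 =>
      rw [s_zero, s_one]
      push_cast
      nlinarith
    | m + 1 =>
      rcases Nat.lt_or_ge (m+2) (n+1) with h | h
      · have h1 := ih (m+1) (by omega)
        have h2 := ih m (by omega)
        rw [s_succ, s_succ]
        push_cast at *
        nlinarith
      · have hn : n + 1 = m + 2 := by omega
        have : ((n:ℝ)+1) - ((m+1)+1) = 0 := by
          have : (n:ℝ) = (m:ℝ) + 1 := by exact_mod_cast congrArg (fun x : ℕ => (x:ℝ)) (by omega : n = m + 1)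
          rw [this]; ring
        push_cast
        rw [show ((n:ℝ)+1) - ((m:ℝ)+1+1) = 0 from by push_cast at this; linarith, zero_mul]
        have hd : s b (n+1) (m+2) = (1+b)^(n+1) := by
          rw [show m + 2 = n + 1 from hn.symm, s_diag]
        have : 0 < s b (n+1) (m+1+1) := by
          rw [show m + 1 + 1 = m + 2 from rfl, hd]; positivity
        nlinarith

lemma binom_nonneg (z : ℤ) (c : ℕ) : 0 ≤ binom z c := by
  unfold binom; split_ifs <;> positivity

lemma key {b : ℝ} (hb : -1 < b) (N m' : ℕ) (hm : m' + 1 ≤ N) (z : ℤ) (hz : z + 1 ≤ N) :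
    binom z (m'+1) * s b N m' ≤ binom z m' * s b N (m'+1) ∧
    (0 < binom z m' → binom z (m'+1) * s b N m' < binom z m' * s b N (m'+1)) := by
  have hs0 : 0 < s b N m' := s_pos hb N m' (by omega)
  have hs1 : 0 < s b N (m'+1) := s_pos hb N (m'+1) hm
  unfold binom
  split_ifs with h
  · set a := z.toNat with ha
    have haN : a + 1 ≤ N := by omega
    rcases Nat.lt_or_ge a m' with hlt | hge
    · rw [Nat.choose_eq_zero_of_lt hlt, Nat.choose_eq_zero_of_lt (by omega)]
      simp
    · have hstrict : (a.choose (m'+1) : ℝ) * s b N m' < (a.choose m' : ℝ) * s b N (m'+1) := by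
        have hc : (a.choose (m'+1) : ℝ) * ((m':ℝ)+1) = (a.choose m' : ℝ) * ((a:ℝ) - m') := by
          have := Nat.choose_succ_right_eq a m'
          have hc2 : (a.choose (m'+1) * (m'+1) : ℕ) = a.choose m' * (a - m') := this
          have := congrArg (fun x : ℕ => (x:ℝ)) hc2
          push_cast [Nat.cast_sub hge] at this
          push_cast
          linarith
        have hcp : 0 < (a.choose m' : ℝ) := by
          exact_mod_cast Nat.choose_pos hge
        have hf := f_pos hb N m' hm
        have haN' : (a:ℝ) - m' ≤ (N:ℝ) - (m'+1) := by
          have : (a:ℝ) + 1 ≤ N := by exact_mod_cast haN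
          linarith
        have h0 : (a.choose (m'+1) : ℝ) * s b N m' * ((m':ℝ)+1)
            = (a.choose m' : ℝ) * (((a:ℝ) - m') * s b N m') := by
          nlinarith [hc]
        have h1 : (a.choose m' : ℝ) * (((a:ℝ)-m') * s b N m')
            ≤ (a.choose m' : ℝ) * (((N:ℝ)-(m'+1)) * s b N m') :=
          mul_le_mul_of_nonneg_left (mul_le_mul_of_nonneg_right haN' hs0.le) hcp.le
        have h2 : (a.choose m' : ℝ) * (((N:ℝ)-(m'+1)) * s b N m')
            < (a.choose m' : ℝ) * (((m':ℝ)+1) * s b N (m'+1)) :=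
          mul_lt_mul_of_pos_left hf hcp
        have hfin : (a.choose (m'+1) : ℝ) * s b N m' * ((m':ℝ)+1)
            < (a.choose m' : ℝ) * s b N (m'+1) * ((m':ℝ)+1) := by
          nlinarith [h0, h1, h2]
        exact lt_of_mul_lt_mul_right hfin (by positivity)
      exact ⟨le_of_lt hstrict, fun _ => hstrict⟩
  · simp

/-- The key strict inequality A < C in the zero-sum inspection game. -/
theorem stmt_9 (n m k : ℕ) (b : ℝ) (r : ℕ → ℝ)
    (hb : -1 < b) (hm : 0 < m) (hmn : m < n) (hk : 0 < k)
    (hr : ∀ i, 0 ≤ r i)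
    (ht : 0 < t r (n - 1) (m - 1) k) :
    t r (n - 1) m k / t r (n - 1) (m - 1) k
      < s b (n - 1) m / s b (n - 1) (m - 1) ∧
    -t r (n - 1) (m - 1) k / s b (n - 1) (m - 1)
      < -t r (n - 1) m k / s b (n - 1) m := by
  obtain ⟨m', rfl⟩ : ∃ m', m = m' + 1 := ⟨m - 1, by omega⟩
  obtain ⟨N, rfl⟩ : ∃ N, n = N + 1 := ⟨n - 1, by omega⟩
  simp only [Nat.add_sub_cancel] at *
  have hmN : m' + 1 ≤ N := by omega
  have hs0 : 0 < s b N m' := s_pos hb N m' (by omega)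
  have hs1 : 0 < s b N (m'+1) := s_pos hb N (m'+1) hmN
  have main : t r N (m'+1) k * s b N m' < t r N m' k * s b N (m'+1) := by
    unfold t at ht ⊢
    rw [Finset.sum_mul, Finset.sum_mul]
    have hwit : ∃ i ∈ Finset.Icc 1 k,
        (0:ℝ) < r (k + 1 - i) * binom ((N:ℤ) - i) m' := by
      apply Finset.exists_lt_of_sum_lt
      simpa using ht
    obtain ⟨j, hj, hjpos⟩ := hwit
    apply Finset.sum_lt_sum
    · intro i hi
      have hi1 : 1 ≤ i := (Finset.mem_Icc.mp hi).1
      have hz : ((N:ℤ) - i) + 1 ≤ N := by omega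
      have hkey := (key hb N m' hmN ((N:ℤ) - i) hz).1
      have := mul_le_mul_of_nonneg_left hkey (hr (k + 1 - i))
      calc r (k + 1 - i) * binom ((N:ℤ) - i) (m'+1) * s b N m'
          = r (k + 1 - i) * (binom ((N:ℤ) - i) (m'+1) * s b N m') := by ring
        _ ≤ r (k + 1 - i) * (binom ((N:ℤ) - i) m' * s b N (m'+1)) := this
        _ = r (k + 1 - i) * binom ((N:ℤ) - i) m' * s b N (m'+1) := by ring
    · refine ⟨j, hj, ?_⟩
      have hj1 : 1 ≤ j := (Finset.mem_Icc.mp hj).1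
      have hz : ((N:ℤ) - j) + 1 ≤ N := by omega
      have hrpos : 0 < r (k + 1 - j) := by
        rcases lt_or_ge 0 (r (k + 1 - j)) with h | h
        · exact h
        · exfalso
          have : r (k + 1 - j) = 0 := le_antisymm h (hr _)
          rw [this] at hjpos; simp at hjpos
      have hbpos : 0 < binom ((N:ℤ) - j) m' := by
        by_contra hc
        push_neg at hc
        have : binom ((N:ℤ) - j) m' = 0 := le_antisymm hc (binom_nonneg _ _)
        rw [this] at hjpos; simp at hjpos
      have hkey := (key hb N m' hmN ((N:ℤ) - j) hz).2 hbpos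
      calc r (k + 1 - j) * binom ((N:ℤ) - j) (m'+1) * s b N m'
          = r (k + 1 - j) * (binom ((N:ℤ) - j) (m'+1) * s b N m') := by ring
        _ < r (k + 1 - j) * (binom ((N:ℤ) - j) m' * s b N (m'+1)) := by
            exact mul_lt_mul_of_pos_left hkey hrpos
        _ = r (k + 1 - j) * binom ((N:ℤ) - j) m' * s b N (m'+1) := by ring
  constructor
  · rw [div_lt_div_iff₀ ht hs0]
    linarith
  · rw [div_lt_div_iff₀ hs0 hs1]
    nlinarith
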